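/- For the maximally correlated pair (X, Y) produced by the paper's correlated perturbation: E[(X + Y − w_i − w_j)²] = −4(m̄ − c)(m̄ − (c − r·α(ε))) if m̄ ≤ c, and E[(X + Y − w_i − w_j)²] = −4(m̄ − c)(m̄ − (c + r·α(ε))) if m̄ ≥ c, where m̄ = (w_i + w_j)/2. -/

import Mathlib

open Real Set

/-- `α(ε) = (e^ε + 1)/(e^ε − 1)`. -/
noncomputable def alphaFn (ε : ℝ) : ℝ := (Real.exp ε + 1) / (Real.exp ε - 1)

/-- The LDP-FL marginal `P(output = c + rα(ε))` at input `u`. -/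
noncomputable def qOf (c r ε u : ℝ) : ℝ := 1 / 2 + (u - c) / (2 * r * alphaFn ε)

/-- The output level associated with a Boolean outcome: `true ↦ c + rα(ε)`, `false ↦ c − rα(ε)`. -/
noncomputable def valOf (c r ε : ℝ) (b : Bool) : ℝ :=
  if b then c + r * alphaFn ε else c - r * alphaFn ε

/-- The joint pmf of the maximally (negatively) correlated pair `(X, Y)` produced by the
paper's correlated perturbation (the antitone coupling of the two LDP-FL marginals
`P_A = qOf c r ε wi`, `P_B = qOf c r ε wj`); `true ↦ c + rα(ε)`, `false ↦ c − rα(ε)`. -/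
noncomputable def jpCor (c r ε wi wj : ℝ) (b b' : Bool) : ℝ :=
  if b then
    (if b' then max 0 (qOf c r ε wi + qOf c r ε wj - 1)
     else min (qOf c r ε wi) (1 - qOf c r ε wj))
  else
    (if b' then min (1 - qOf c r ε wi) (qOf c r ε wj)
     else max 0 (1 - qOf c r ε wi - qOf c r ε wj))

/-- `E[(X + Y − wi − wj)²]` for the maximally correlated pair. -/
noncomputable def mseCor (c r ε wi wj : ℝ) : ℝ :=
  ∑ b : Bool, ∑ b' : Bool,
    jpCor c r ε wi wj b b' * (valOf c r ε b + valOf c r ε b' - wi - wj) ^ 2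

/-
When `P_A + P_B ≤ 1`, i.e. `m̄ ≤ c`, the antitone coupling puts no mass on `(c + rα, c + rα)`,
so `X + Y` equals `2c` with probability `P_A + P_B` and `2(c − rα)` otherwise. Since
`P_A + P_B = 1 + (m̄ − c)/(rα)`, the mean squared error collapses to `−4(m̄ − c)(m̄ − c + rα)`.
The case `m̄ ≥ c` follows by the reflection `w ↦ 2c − w`, which exchanges the two output levels
and maps `P_A, P_B` to `1 − P_A, 1 − P_B`.
-/

lemma alphaFn_pos {ε : ℝ} (hε : 0 < ε) : 0 < alphaFn ε := by
  have h : 1 < Real.exp ε := Real.one_lt_exp_iff.2 hε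
  exact div_pos (by linarith) (by linarith)

section

variable {c r ε wi wj : ℝ}

lemma qOf_add_qOf :
    qOf c r ε wi + qOf c r ε wj = 1 + ((wi + wj) / 2 - c) / (r * alphaFn ε) := by
  unfold qOf
  ring

lemma qOf_reflect (u : ℝ) : qOf c r ε (2 * c - u) = 1 - qOf c r ε u := by
  unfold qOf
  ring

lemma jpCor_reflect (b b' : Bool) :
    jpCor c r ε (2 * c - wi) (2 * c - wj) b b' = jpCor c r ε wi wj (!b) (!b') := by
  cases b <;> cases b' <;>
    simp only [jpCor, qOf_reflect, Bool.not_false, Bool.not_true, if_true, if_false,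
      Bool.false_eq_true]
  · congr 1; ring
  · rw [sub_sub_cancel, min_comm]
  · rw [sub_sub_cancel, min_comm]
  · congr 1; ring

lemma mseCor_reflect :
    mseCor c r ε (2 * c - wi) (2 * c - wj) = mseCor c r ε wi wj := by
  simp only [mseCor, Fintype.sum_bool, jpCor_reflect, valOf, Bool.not_true, Bool.not_false,
    if_true, if_false, Bool.false_eq_true]
  ring

lemma mseCor_of_qOf_add_le_one (h : qOf c r ε wi + qOf c r ε wj ≤ 1) :
    mseCor c r ε wi wj =
      (qOf c r ε wi + qOf c r ε wj) * (2 * c - wi - wj) ^ 2 +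
        (1 - (qOf c r ε wi + qOf c r ε wj)) * (2 * (c - r * alphaFn ε) - wi - wj) ^ 2 := by
  have hpp : max 0 (qOf c r ε wi + qOf c r ε wj - 1) = 0 := max_eq_left (by linarith)
  have hpm : min (qOf c r ε wi) (1 - qOf c r ε wj) = qOf c r ε wi := min_eq_left (by linarith)
  have hmp : min (1 - qOf c r ε wi) (qOf c r ε wj) = qOf c r ε wj := min_eq_right (by linarith)
  have hmm : max 0 (1 - qOf c r ε wi - qOf c r ε wj) = 1 - qOf c r ε wi - qOf c r ε wj :=
    max_eq_right (by linarith)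
  simp only [mseCor, jpCor, valOf, Fintype.sum_bool, if_true, if_false, Bool.false_eq_true,
    hpp, hpm, hmp, hmm]
  ring

lemma mseCor_of_mean_le (hr : 0 < r) (hε : 0 < ε) (hm : (wi + wj) / 2 ≤ c) :
    mseCor c r ε wi wj =
      -4 * ((wi + wj) / 2 - c) * ((wi + wj) / 2 - (c - r * alphaFn ε)) := by
  have hα := alphaFn_pos hε
  have ha : 0 < r * alphaFn ε := mul_pos hr hα
  have hle : qOf c r ε wi + qOf c r ε wj ≤ 1 := by
    rw [qOf_add_qOf, add_le_iff_nonpos_right]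
    exact div_nonpos_of_nonpos_of_nonneg (by linarith) ha.le
  rw [mseCor_of_qOf_add_le_one hle, qOf_add_qOf]
  field_simp [hr.ne', hα.ne']
  ring

end

theorem stmt13_general (c r ε : ℝ) (hr : 0 < r) (hε : 0 < ε)
    (wi wj : ℝ) :
    ((wi + wj) / 2 ≤ c →
      mseCor c r ε wi wj =
        -4 * ((wi + wj) / 2 - c) * ((wi + wj) / 2 - (c - r * alphaFn ε))) ∧
    (c ≤ (wi + wj) / 2 →
      mseCor c r ε wi wj =
        -4 * ((wi + wj) / 2 - c) * ((wi + wj) / 2 - (c + r * alphaFn ε))) := by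
  refine ⟨mseCor_of_mean_le hr hε, fun hm => ?_⟩
  have hreflected :=
    mseCor_of_mean_le (c := c) (wi := 2 * c - wi) (wj := 2 * c - wj) hr hε (by linarith)
  rw [mseCor_reflect] at hreflected
  rw [hreflected]
  ring

/-- for the maximally correlated pair `(X, Y)`, with `m̄ = (wi + wj)/2`,
`E[(X + Y − wi − wj)²] = −4(m̄ − c)(m̄ − (c − rα(ε)))` if `m̄ ≤ c`, and
`E[(X + Y − wi − wj)²] = −4(m̄ − c)(m̄ − (c + rα(ε)))` if `m̄ ≥ c`. -/
theorem stmt13 (c r ε : ℝ) (hr : 0 < r) (hε : 0 < ε)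
    (wi wj : ℝ) (hwi : wi ∈ Icc (c - r) (c + r)) (hwj : wj ∈ Icc (c - r) (c + r)) :
    ((wi + wj) / 2 ≤ c →
      mseCor c r ε wi wj =
        -4 * ((wi + wj) / 2 - c) * ((wi + wj) / 2 - (c - r * alphaFn ε))) ∧
    (c ≤ (wi + wj) / 2 →
      mseCor c r ε wi wj =
        -4 * ((wi + wj) / 2 - c) * ((wi + wj) / 2 - (c + r * alphaFn ε))) :=
  stmt13_general c r ε hr hε wi wj
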